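/- There exists a unique x < 0 such that the tail conditional variance Var[X | X < x] equals the central conditional variance Var[X | x < X < -x] for a standard normal X; equivalently, there is a unique negative solution of the equation -xΦ(x) = φ(x)(1 - 2Φ(x)). -/

import Mathlib

open MeasureTheory Real

/-- Standard normal density. -/
noncomputable def stdPdf (x : ℝ) : ℝ := (Real.sqrt (2 * Real.pi))⁻¹ * Real.exp (-x ^ 2 / 2)

/-- Standard normal distribution function. -/
noncomputable def stdCdf (x : ℝ) : ℝ := ∫ t in Set.Iic x, stdPdf t

open Set Filter Topology ProbabilityTheory

/-! For `x < 0` both equations say that `varGap x = -xΦ(x) - φ(x)(1 - 2Φ(x))` vanishes.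
Boyd's bound `Φ(x) ≤ 4φ(x)/(√(x² + 8) - 3x)`, proved by comparing derivatives and letting
`x → -∞`, gives `varGap < 0` on `(-∞, -1]` and `varGap' = 2φ² - Φ(1 + 2xφ) > 0` on `[-1, -1/2]`,
while `Φ(x) ≥ 1/2 + xφ(0)` gives `varGap > 0` on `[-1/2, 0)`. So there is exactly one root, and it
lies in `(-1, -1/2)`. -/

lemma stdPdf_eq_gaussianPDFReal : stdPdf = gaussianPDFReal 0 1 := by
  ext x
  simp [stdPdf, gaussianPDFReal]

lemma stdPdf_pos (x : ℝ) : 0 < stdPdf x := by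
  unfold stdPdf; positivity

lemma stdPdf_neg (x : ℝ) : stdPdf (-x) = stdPdf x := by
  simp [stdPdf]

lemma integrable_stdPdf : Integrable stdPdf :=
  stdPdf_eq_gaussianPDFReal ▸ integrable_gaussianPDFReal 0 1

lemma stdPdf_mul_exp (x : ℝ) : stdPdf x * exp (x ^ 2 / 2) = stdPdf 0 := by
  rw [stdPdf, stdPdf, mul_assoc, ← exp_add]
  ring_nf

lemma stdPdf_le_stdPdf_zero (x : ℝ) : stdPdf x ≤ stdPdf 0 := by
  rw [← stdPdf_mul_exp x]
  exact le_mul_of_one_le_right (stdPdf_pos x).le (one_le_exp (by positivity))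

lemma stdPdf_zero_le : stdPdf 0 ≤ 2 / 5 := by
  have : (5 / 2) ^ 2 ≤ 2 * π := by linarith [pi_gt_d2]
  simpa [stdPdf] using inv_anti₀ (by norm_num) (le_sqrt_of_sq_le this)

lemma le_stdPdf_zero : (0.39 : ℝ) ≤ stdPdf 0 := by
  have h : √(2 * π) ≤ 1 / 0.39 := sqrt_le_iff.2 ⟨by norm_num, by nlinarith [pi_lt_d2]⟩
  simpa [stdPdf] using inv_anti₀ (by positivity) h

lemma hasDerivAt_stdPdf (x : ℝ) : HasDerivAt stdPdf (-x * stdPdf x) x := by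
  have h : HasDerivAt (fun y : ℝ => -y ^ 2 / 2) (-x) x :=
    ((hasDerivAt_pow 2 x).neg.div_const 2).congr_deriv (by push_cast; ring)
  exact (h.exp.const_mul _).congr_deriv (by simp only [stdPdf]; ring)

lemma tendsto_stdPdf_atBot : Tendsto stdPdf atBot (𝓝 0) := by
  have h : Tendsto (fun x : ℝ => -x ^ 2 / 2) atBot atBot := by
    refine tendsto_atBot_mono' _ ?_ tendsto_id
    filter_upwards [eventually_le_atBot (-2)] with x hx
    simp only [id]; nlinarith
  have := (tendsto_exp_atBot.comp h).const_mul (√(2 * π))⁻¹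
  rwa [mul_zero] at this

lemma stdCdf_eq_cdf : stdCdf = cdf (gaussianReal 0 1) := by
  ext x
  rw [cdf_eq_real, measureReal_def, gaussianReal_apply_eq_integral _ one_ne_zero,
    ENNReal.toReal_ofReal (setIntegral_nonneg measurableSet_Iic fun _ _ =>
      gaussianPDFReal_nonneg _ _ _), stdCdf, stdPdf_eq_gaussianPDFReal]

lemma tendsto_stdCdf_atBot : Tendsto stdCdf atBot (𝓝 0) :=
  stdCdf_eq_cdf ▸ tendsto_cdf_atBot _

lemma stdCdf_sub (a b : ℝ) : stdCdf b - stdCdf a = ∫ x in a..b, stdPdf x :=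
  intervalIntegral.integral_Iic_sub_Iic integrable_stdPdf.integrableOn
    integrable_stdPdf.integrableOn

lemma hasDerivAt_stdCdf (x : ℝ) : HasDerivAt stdCdf (stdPdf x) x := by
  have hcont : Continuous stdPdf := by unfold stdPdf; fun_prop
  have h := intervalIntegral.integral_hasDerivAt_right (a := 0) (b := x)
    integrable_stdPdf.intervalIntegrable hcont.aestronglyMeasurable.stronglyMeasurableAtFilter
    hcont.continuousAt
  have heq : stdCdf = fun y => stdCdf 0 + ∫ t in (0 : ℝ)..y, stdPdf t := by
    ext y; rw [← stdCdf_sub]; ring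
  rw [heq]
  exact h.const_add _

lemma stdCdf_strictMono : StrictMono stdCdf :=
  strictMono_of_hasDerivAt_pos hasDerivAt_stdCdf stdPdf_pos

lemma stdCdf_pos (x : ℝ) : 0 < stdCdf x :=
  (stdCdf_strictMono.monotone.le_of_tendsto tendsto_stdCdf_atBot (x - 1)).trans_lt
    (stdCdf_strictMono (by linarith))

lemma stdCdf_zero : stdCdf 0 = 1 / 2 := by
  have hsymm : stdCdf 0 = ∫ x in Ioi (0 : ℝ), stdPdf x := by
    rw [stdCdf, ← neg_zero, ← integral_comp_neg_Ioi]
    simp [stdPdf_neg]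
  have htotal : stdCdf 0 + ∫ x in Ioi (0 : ℝ), stdPdf x = 1 := by
    rw [stdCdf, intervalIntegral.integral_Iic_add_Ioi integrable_stdPdf.integrableOn
      integrable_stdPdf.integrableOn, stdPdf_eq_gaussianPDFReal,
      integral_gaussianPDFReal_eq_one _ one_ne_zero]
  linarith

lemma stdCdf_sub_le {x y : ℝ} (hxy : x ≤ y) : stdCdf y - stdCdf x ≤ stdPdf 0 * (y - x) :=
  image_sub_le_mul_sub_of_deriv_le (fun z => (hasDerivAt_stdCdf z).differentiableAt)
    (fun z => (hasDerivAt_stdCdf z).deriv ▸ stdPdf_le_stdPdf_zero z) hxy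

lemma stdPdf_zero_mul_le {x : ℝ} (hx : x ^ 2 ≤ 4) : stdPdf 0 * (1 - x ^ 2 / 4) ^ 2 ≤ stdPdf x := by
  have h : (1 - x ^ 2 / 4) ^ 2 ≤ exp (-(x ^ 2 / 4)) ^ 2 :=
    pow_le_pow_left₀ (by linarith) (one_sub_le_exp_neg _) 2
  have hsq : exp (-(x ^ 2 / 4)) ^ 2 = exp (-x ^ 2 / 2) := by
    rw [← exp_nat_mul]; ring_nf
  have hφ : stdPdf x = stdPdf 0 * exp (-x ^ 2 / 2) := by simp [stdPdf]
  rw [hφ, ← hsq]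
  exact mul_le_mul_of_nonneg_left h (stdPdf_pos 0).le

lemma neg_mul_le_sqrt_mul (x : ℝ) : -x * (x ^ 2 + 6) ≤ √(x ^ 2 + 8) * (x ^ 2 + 2) := by
  have hW : √(x ^ 2 + 8) ^ 2 = x ^ 2 + 8 := sq_sqrt (by positivity)
  have hA : 0 < √(x ^ 2 + 8) * (x ^ 2 + 2) := by positivity
  have h32 : (√(x ^ 2 + 8) * (x ^ 2 + 2)) ^ 2 - (-x * (x ^ 2 + 6)) ^ 2 = 32 := by
    linear_combination (x ^ 2 + 2) ^ 2 * hW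
  nlinarith

/-- Boyd's (1959) bound on the Mills ratio. -/
noncomputable def boydBound (x : ℝ) : ℝ := 4 * stdPdf x / (√(x ^ 2 + 8) - 3 * x)

lemma two_le_sqrt_sub {x : ℝ} (hx : x ≤ 0) : 2 ≤ √(x ^ 2 + 8) - 3 * x := by
  have : 2 ≤ √(x ^ 2 + 8) := le_sqrt_of_sq_le (by nlinarith)
  linarith

lemma exists_hasDerivAt_boydBound_ge {x : ℝ} (hx : x ≤ 0) :
    ∃ r, HasDerivAt boydBound r x ∧ stdPdf x ≤ r := by
  set W := √(x ^ 2 + 8)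
  have hW : W ^ 2 = x ^ 2 + 8 := sq_sqrt (by positivity)
  have hWpos : 0 < W := by positivity
  have hE := two_le_sqrt_sub hx
  have hsqrt : HasDerivAt (fun y => √(y ^ 2 + 8)) (x / W) x :=
    ((hasDerivAt_pow 2 x).add_const 8).sqrt (by positivity) |>.congr_deriv (by push_cast; ring)
  refine ⟨_, ((hasDerivAt_stdPdf x).const_mul 4).div
    (hsqrt.sub (((hasDerivAt_id x).const_mul 3).congr_deriv (mul_one 3))) (by linarith), ?_⟩
  rw [le_div_iff₀ (by positivity), ← mul_le_mul_iff_of_pos_right hWpos]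
  have hdiff : (4 * (-x * stdPdf x) * (W - 3 * x) - 4 * stdPdf x * (x / W - 3)) * W -
      stdPdf x * (W - 3 * x) ^ 2 * W = 2 * stdPdf x * (W * (x ^ 2 + 2) + x * (x ^ 2 + 6)) := by
    field_simp
    linear_combination stdPdf x * (2 * x - W) * hW
  nlinarith [neg_mul_le_sqrt_mul x, stdPdf_pos x]

lemma monotoneOn_boydBound_sub_stdCdf : MonotoneOn (fun x => boydBound x - stdCdf x) (Iic 0) := by
  have hderiv : ∀ x ≤ 0, ∃ r, HasDerivAt (fun x => boydBound x - stdCdf x) r x ∧ 0 ≤ r := by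
    intro x hx
    obtain ⟨r, hr, hle⟩ := exists_hasDerivAt_boydBound_ge hx
    exact ⟨_, hr.sub (hasDerivAt_stdCdf x), sub_nonneg.2 hle⟩
  refine monotoneOn_of_deriv_nonneg (convex_Iic 0) (fun x hx => ?_) (fun x hx => ?_)
    (fun x hx => ?_)
  · obtain ⟨r, hr, -⟩ := hderiv x hx
    exact hr.continuousAt.continuousWithinAt
  · obtain ⟨r, hr, -⟩ := hderiv x (interior_subset (s := Iic 0) hx)
    exact hr.differentiableAt.differentiableWithinAt
  · obtain ⟨r, hr, hr0⟩ := hderiv x (interior_subset (s := Iic 0) hx)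
    rwa [hr.deriv]

lemma tendsto_boydBound_atBot : Tendsto boydBound atBot (𝓝 0) := by
  have h2 : Tendsto (fun x => 2 * stdPdf x) atBot (𝓝 0) := by
    simpa using tendsto_stdPdf_atBot.const_mul 2
  refine tendsto_of_tendsto_of_tendsto_of_le_of_le' tendsto_const_nhds h2 ?_ ?_ <;>
    filter_upwards [eventually_le_atBot 0] with x hx <;> have hE := two_le_sqrt_sub hx
  · exact div_nonneg (by linarith [stdPdf_pos x]) (by linarith)
  · rw [boydBound, div_le_iff₀ (by linarith)]
    nlinarith [stdPdf_pos x]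

lemma stdCdf_le_boydBound {x : ℝ} (hx : x ≤ 0) : stdCdf x ≤ boydBound x := by
  have h := tendsto_boydBound_atBot.sub tendsto_stdCdf_atBot
  rw [sub_zero] at h
  have : 0 ≤ boydBound x - stdCdf x := le_of_tendsto h <| by
    filter_upwards [eventually_le_atBot x] with y hy
    exact monotoneOn_boydBound_sub_stdCdf (hy.trans hx) hx hy
  linarith

/-- For `x < 0`, `Φ(x)²(1 - 2Φ(x))/φ(x)` times `Var[X | X < x] - Var[X | x < X < -x]`. -/
noncomputable def varGap (x : ℝ) : ℝ := -x * stdCdf x - stdPdf x * (1 - 2 * stdCdf x)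

lemma hasDerivAt_varGap (x : ℝ) :
    HasDerivAt varGap (2 * stdPdf x ^ 2 - stdCdf x * (1 + 2 * x * stdPdf x)) x :=
  ((((hasDerivAt_id x).neg.mul (hasDerivAt_stdCdf x)).sub
    ((hasDerivAt_stdPdf x).mul (((hasDerivAt_stdCdf x).const_mul 2).const_sub 1)))).congr_deriv
    (by simp only [Pi.neg_apply, id]; ring)

lemma varGap_neg {x : ℝ} (hx : x ≤ -1) : varGap x < 0 := by
  set W := √(x ^ 2 + 8)
  have hW : W ^ 2 = x ^ 2 + 8 := sq_sqrt (by positivity)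
  have hφ := stdPdf_pos x
  have hΦ := stdCdf_pos x
  have hexp : stdPdf x * (x ^ 4 + 4 * x ^ 2 + 8) ≤ 16 / 5 := by
    have := (mul_le_mul_of_nonneg_left (quadratic_le_exp_of_nonneg (x := x ^ 2 / 2) (by positivity))
      hφ.le).trans ((stdPdf_mul_exp x).trans_le stdPdf_zero_le)
    linarith
  have hpoly : x ^ 2 - 6 * x + 17 < 15 / 8 * (x ^ 4 + 4 * x ^ 2 + 8) := by
    nlinarith [mul_nonneg (neg_nonneg.2 (by linarith : x + 1 ≤ 0)) (sq_nonneg (x + 1)),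
      sq_nonneg (x + 1), sq_nonneg (x ^ 2 - 1)]
  -- with Boyd's bound, `Φ(-x + 2φ) < φ` follows from `8φ < W + x = 8 / (W - x)`
  have hW17 : W ≤ (x ^ 2 + 17) / 6 := by nlinarith [sq_nonneg (W - 3)]
  have hφW : stdPdf x * (W - x) < 1 := by nlinarith
  have hWx : (W + x) * (W - x) = 8 := by linear_combination hW
  have h8 : 8 * stdPdf x < W + x :=
    lt_of_mul_lt_mul_right (by linarith) (by linarith [sqrt_nonneg (x ^ 2 + 8)] : 0 ≤ W - x)
  have hboyd : stdCdf x * (W - 3 * x) ≤ 4 * stdPdf x :=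
    (le_div_iff₀ (by linarith [two_le_sqrt_sub (x := x) (by linarith)])).1
      (stdCdf_le_boydBound (by linarith))
  have := mul_lt_mul_of_pos_left (by linarith : 4 * (-x + 2 * stdPdf x) < W - 3 * x) hΦ
  unfold varGap
  nlinarith

lemma varGap_pos {x : ℝ} (h1 : -1 / 2 ≤ x) (h2 : x < 0) : 0 < varGap x := by
  have hI := stdCdf_sub_le h2.le
  have hΦ := stdCdf_strictMono h2
  rw [stdCdf_zero] at hI hΦ
  have hφ := stdPdf_pos x
  have hK := stdPdf_zero_le
  have hexp : stdPdf x * (1 + x ^ 2 / 2) ≤ 2 / 5 :=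
    (mul_le_mul_of_nonneg_left (by linarith [add_one_le_exp (x ^ 2 / 2)]) hφ.le).trans
      ((stdPdf_mul_exp x).trans_le stdPdf_zero_le)
  have hpoly : 4 / 5 < (5 / 4 + x) * (1 + x ^ 2 / 2) := by
    nlinarith [mul_nonneg (by linarith : 0 ≤ x + 1 / 2) (sq_nonneg x)]
  have h2φ : 2 * stdPdf x < 5 / 4 + x := by nlinarith
  have hI' : 1 / 2 - stdCdf x ≤ 2 / 5 * -x := by nlinarith
  unfold varGap
  nlinarith [mul_le_mul_of_nonneg_right hI' (by linarith : 0 ≤ -x + 2 * stdPdf x)]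

lemma stdCdf_mul_lt {x : ℝ} (h1 : -1 ≤ x) (h2 : x ≤ -1 / 2) :
    stdCdf x * (1 + 2 * x * stdPdf x) < 2 * stdPdf x ^ 2 := by
  set W := √(x ^ 2 + 8)
  have hW : 2.8 ≤ W := le_sqrt_of_sq_le (by nlinarith)
  -- with Boyd's bound, the claim follows from `2 < φ(W - 7x)`
  have hboyd : stdCdf x * (W - 3 * x) ≤ 4 * stdPdf x :=
    (le_div_iff₀ (by linarith)).1 (stdCdf_le_boydBound (by linarith))
  have hφ := stdPdf_pos x
  have hφ_low : 0.39 * (1 - x ^ 2 / 4) ^ 2 ≤ stdPdf x :=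
    (mul_le_mul_of_nonneg_right le_stdPdf_zero (sq_nonneg _)).trans
      (stdPdf_zero_mul_le (by nlinarith))
  have hpoly : 2 < 0.39 * (1 - x ^ 2 / 4) ^ 2 * (2.8 - 7 * x) := by
    nlinarith [mul_nonneg (by linarith : 0 ≤ x + 1) (by linarith : 0 ≤ -1 / 2 - x)]
  have hφW : 2 < stdPdf x * (W - 7 * x) := by nlinarith
  have hnonneg : 0 ≤ 1 + 2 * x * stdPdf x := by
    nlinarith [stdPdf_le_stdPdf_zero x, stdPdf_zero_le]
  have hE : 0 < W - 3 * x := by linarith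
  refine lt_of_mul_lt_mul_right ?_ hE.le
  calc stdCdf x * (1 + 2 * x * stdPdf x) * (W - 3 * x)
      ≤ 4 * stdPdf x * (1 + 2 * x * stdPdf x) := by nlinarith
    _ < 2 * stdPdf x ^ 2 * (W - 3 * x) := by nlinarith

lemma strictMonoOn_varGap : StrictMonoOn varGap (Icc (-1) (-1 / 2)) := by
  refine strictMonoOn_of_deriv_pos (convex_Icc _ _)
    (fun x _ => (hasDerivAt_varGap x).continuousAt.continuousWithinAt) fun x hx => ?_
  rw [interior_Icc] at hx
  rw [(hasDerivAt_varGap x).deriv]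
  linarith [stdCdf_mul_lt hx.1.le hx.2.le]

lemma existsUnique_varGap_eq_zero : ∃! x : ℝ, x < 0 ∧ varGap x = 0 := by
  have hcont : ContinuousOn varGap (Icc (-1) (-1 / 2)) :=
    fun x _ => (hasDerivAt_varGap x).continuousAt.continuousWithinAt
  obtain ⟨c, hc, hc0⟩ := intermediate_value_Ioo (by norm_num) hcont
    ⟨varGap_neg le_rfl, varGap_pos le_rfl (by norm_num)⟩
  refine ⟨c, ⟨by linarith [hc.2], hc0⟩, fun y ⟨hy, hy0⟩ => ?_⟩
  have hy1 : -1 < y := not_le.1 fun h => (varGap_neg h).ne hy0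
  have hy2 : y < -1 / 2 := not_le.1 fun h => (varGap_pos h hy).ne' hy0
  exact strictMonoOn_varGap.injOn ⟨hy1.le, hy2.le⟩ (Ioo_subset_Icc_self hc) (hy0.trans hc0.symm)

lemma tail_variance_sub_central_variance {x : ℝ} (hx : x < 0) :
    (1 - x * stdPdf x / stdCdf x - stdPdf x ^ 2 / stdCdf x ^ 2) -
      (1 + 2 * x * stdPdf x / (1 - 2 * stdCdf x)) =
      stdPdf x * varGap x / (stdCdf x ^ 2 * (1 - 2 * stdCdf x)) := by
  have hΦ := (stdCdf_pos x).ne'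
  have hΦ2 : 1 - stdCdf x * 2 ≠ 0 := by
    linarith [stdCdf_strictMono hx, stdCdf_zero]
  unfold varGap
  field_simp
  ring

/-- There exists a unique `x < 0` at which the tail conditional variance of a standard
normal equals the central conditional variance; equivalently, there is a unique negative
solution of `-xΦ(x) = φ(x)(1 - 2Φ(x))`. -/
theorem stmt_9 :
    (∃! x : ℝ, x < 0 ∧
      1 - x * stdPdf x / stdCdf x - (stdPdf x) ^ 2 / (stdCdf x) ^ 2 =
        1 + 2 * x * stdPdf x / (1 - 2 * stdCdf x)) ∧
    (∃! x : ℝ, x < 0 ∧ -x * stdCdf x = stdPdf x * (1 - 2 * stdCdf x)) := by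
  constructor <;> refine (existsUnique_congr fun x => and_congr_right fun hx => ?_).2
    existsUnique_varGap_eq_zero
  · have hden : 0 < stdCdf x ^ 2 * (1 - 2 * stdCdf x) :=
      mul_pos (pow_pos (stdCdf_pos x) 2) (by linarith [stdCdf_strictMono hx, stdCdf_zero])
    rw [← sub_eq_zero, tail_variance_sub_central_variance hx, div_eq_zero_iff,
      mul_eq_zero_iff_left (stdPdf_pos x).ne', or_iff_left hden.ne']
  · rw [varGap, sub_eq_zero]
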